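/- arXiv:math/0609056 — 5 statements merged into one kernel-verified Lean document; each statement's English description precedes it below -/
import Mathlib

section
/- The number of lattice paths S = (S_0, S_1, ..., S_n) with S_0 = 0, S_n = n, S_j ≤ j for all j, and S_j ≤ S_{j+1} for all j (i.e., S-paths of n+1 coordinates) is at most the Bell number B_n (the number of set partitions of {1,...,n}), with equality if and only if n < 4. -/
/-- An S-path of `n+1` coordinates: `S 0 = 0`, `S n = n`, `S j ≤ j`, nondecreasing. -/
def SPath (n : ℕ) : Type :=
  {S : Fin (n + 1) → Fin (n + 1) // (S 0 : ℕ) = 0 ∧ (S (Fin.last n) : ℕ) = n ∧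
    (∀ j : Fin (n + 1), (S j : ℕ) ≤ (j : ℕ)) ∧ ∀ j k : Fin (n + 1), j ≤ k → S j ≤ S k}

/-- The Bell number `B n`: the number of set partitions of `{1,...,n}`. -/
noncomputable def bellNumber (n : ℕ) : ℕ := Nat.card (Finpartition (Finset.Icc 1 n))

namespace SPathAux

open Finset
open scoped Classical

variable {n : ℕ}

instance (n : ℕ) : Fintype (SPath n) := by unfold SPath; exact Subtype.fintype _

/-- ℕ-valued version of the path. -/
def sv (P : SPath n) (j : ℕ) : ℕ :=
  if h : j ≤ n then (P.1 ⟨j, Nat.lt_succ_of_le h⟩ : ℕ) else n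

lemma sv_of_le (P : SPath n) {j : ℕ} (h : j ≤ n) :
    sv P j = (P.1 ⟨j, Nat.lt_succ_of_le h⟩ : ℕ) := dif_pos h

lemma sv_of_gt (P : SPath n) {j : ℕ} (h : ¬ j ≤ n) : sv P j = n := dif_neg h

lemma sv_zero (P : SPath n) : sv P 0 = 0 := by
  rw [sv_of_le P (Nat.zero_le n)]
  have h0 : (⟨0, Nat.lt_succ_of_le (Nat.zero_le n)⟩ : Fin (n+1)) = 0 := rfl
  rw [h0]; exact P.2.1

lemma sv_n (P : SPath n) : sv P n = n := by
  rw [sv_of_le P le_rfl]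
  have h0 : (⟨n, Nat.lt_succ_of_le le_rfl⟩ : Fin (n+1)) = Fin.last n := rfl
  rw [h0]; exact P.2.2.1

lemma sv_le_self (P : SPath n) (j : ℕ) : sv P j ≤ j := by
  by_cases h : j ≤ n
  · rw [sv_of_le P h]; exact P.2.2.2.1 _
  · rw [sv_of_gt P h]; omega

lemma sv_mono (P : SPath n) {j k : ℕ} (h : j ≤ k) : sv P j ≤ sv P k := by
  by_cases hk : k ≤ n
  · rw [sv_of_le P (le_trans h hk), sv_of_le P hk]
    exact_mod_cast P.2.2.2.2 _ _ h
  · rw [sv_of_gt P hk]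
    by_cases hj : j ≤ n
    · rw [sv_of_le P hj]; exact Fin.is_le _
    · rw [sv_of_gt P hj]

lemma sv_inj {P Q : SPath n} (h : ∀ j, sv P j = sv Q j) : P = Q := by
  apply Subtype.ext; funext j
  have := h j.1
  rw [sv_of_le P (Nat.lt_succ_iff.1 j.2), sv_of_le Q (Nat.lt_succ_iff.1 j.2)] at this
  exact Fin.ext (by simpa using this)

/-- Height function. -/
def fv (P : SPath n) (j : ℕ) : ℕ := j - sv P j

lemma fv_zero (P : SPath n) : fv P 0 = 0 := by simp [fv, sv_zero]

lemma fv_n (P : SPath n) : fv P n = 0 := by simp [fv, sv_n]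

lemma fv_step (P : SPath n) (j : ℕ) : fv P (j+1) ≤ fv P j + 1 := by
  have h1 : sv P j ≤ sv P (j+1) := sv_mono P (by omega)
  have h2 := sv_le_self P j
  unfold fv; omega

/-- Closing time of `i`. -/
noncomputable def mv (P : SPath n) (i : ℕ) : ℕ :=
  sInf {j | i ≤ j ∧ fv P j ≤ fv P (i - 1)}

lemma mv_mem (P : SPath n) {i : ℕ} (h2 : i ≤ n) :
    i ≤ mv P i ∧ fv P (mv P i) ≤ fv P (i-1) ∧ mv P i ≤ n := by
  have hne : n ∈ {j | i ≤ j ∧ fv P j ≤ fv P (i - 1)} :=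
    ⟨h2, by rw [fv_n]; exact Nat.zero_le _⟩
  have hmem := Nat.sInf_mem (Set.nonempty_of_mem hne)
  exact ⟨hmem.1, hmem.2, Nat.sInf_le hne⟩

lemma mv_le (P : SPath n) {i j : ℕ} (hij : i ≤ j) (hf : fv P j ≤ fv P (i-1)) :
    mv P i ≤ j := Nat.sInf_le ⟨hij, hf⟩

lemma mv_min (P : SPath n) {i j : ℕ} (hij : i ≤ j) (hj : j < mv P i) :
    fv P (i-1) < fv P j := by
  by_contra h
  push_neg at h
  exact absurd (mv_le P hij h) (by omega)

lemma mv_self (P : SPath n) {i k : ℕ} (h2 : i ≤ n) (hk : mv P i = k) : mv P k = k := by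
  have hm := mv_mem P h2
  rcases eq_or_lt_of_le (hk ▸ hm.1) with he | hlt
  · rw [← he]; exact he ▸ hk
  · have hkn : k ≤ n := hk ▸ hm.2.2
    have h1 : fv P (i-1) < fv P (k-1) := mv_min P (by omega) (by omega)
    have h2' : fv P k ≤ fv P (k-1) := le_trans (hk ▸ hm.2.1) (le_of_lt h1)
    have hle : mv P k ≤ k := mv_le P le_rfl h2'
    have hge := (mv_mem P hkn).1
    omega

/-- Counting lemma: the number of still-open elements at time `j` is `fv P j`. -/
lemma card_open (P : SPath n) {j : ℕ} (hj : j ≤ n) :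
    ((Icc 1 j).filter (fun i => j < mv P i)).card = fv P j := by
  rw [← Finset.card_range (fv P j)]
  apply Finset.card_bij (fun a _ => fv P (a - 1))
  · intro a ha
    simp only [mem_filter, mem_Icc] at ha
    simp only [mem_range]
    exact mv_min P ha.1.2 ha.2
  · intro a ha a' ha' hf
    simp only [mem_filter, mem_Icc] at ha ha'
    rcases lt_trichotomy a a' with h | h | h
    · have : fv P (a-1) < fv P (a'-1) := mv_min P (by omega) (by omega)
      omega
    · exact h
    · have : fv P (a'-1) < fv P (a-1) := mv_min P (by omega) (by omega)
      omega
  · intro b hb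
    simp only [mem_range] at hb
    set l := Nat.findGreatest (fun l => fv P l ≤ b) j with hl
    have hspec : fv P l ≤ b :=
      Nat.findGreatest_spec (P := fun l => fv P l ≤ b) (Nat.zero_le j)
        (by show fv P 0 ≤ b; rw [fv_zero]; omega)
    have hlj : l ≤ j := Nat.findGreatest_le j
    have hlne : l ≠ j := by intro h; rw [h] at hspec; omega
    have hgr : ∀ t, l < t → t ≤ j → b < fv P t := by
      intro t h1 h2
      have := Nat.findGreatest_is_greatest (P := fun l => fv P l ≤ b) h1 h2
      omega
    have hl1 : b < fv P (l+1) := hgr (l+1) (by omega) (by omega)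
    have hstep := fv_step P l
    have hfl : fv P l = b := by omega
    refine ⟨l + 1, ?_, by simpa using hfl⟩
    simp only [mem_filter, mem_Icc]
    refine ⟨⟨by omega, by omega⟩, ?_⟩
    by_contra h
    push_neg at h
    have hm := mv_mem P (le_trans (by omega : l + 1 ≤ j) hj)
    have h5 : b < fv P (mv P (l+1)) := hgr _ (by omega) (by omega)
    have h6 : fv P (mv P (l+1)) ≤ fv P l := by simpa using hm.2.1
    omega

/-- The path is recovered from closing times. -/
lemma card_closed (P : SPath n) {j : ℕ} (hj : j ≤ n) :
    ((Icc 1 n).filter (fun i => mv P i ≤ j)).card = sv P j := by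
  have hset : (Icc 1 n).filter (fun i => mv P i ≤ j) =
      (Icc 1 j).filter (fun i => mv P i ≤ j) := by
    ext a
    simp only [mem_filter, mem_Icc]
    constructor
    · rintro ⟨⟨h1, h2⟩, h3⟩
      exact ⟨⟨h1, le_trans (mv_mem P h2).1 h3⟩, h3⟩
    · rintro ⟨⟨h1, h2⟩, h3⟩
      exact ⟨⟨h1, le_trans h2 hj⟩, h3⟩
  have e1 : (Icc 1 j).filter (fun i => mv P i ≤ j) =
      Icc 1 j \ (Icc 1 j).filter (fun i => j < mv P i) := by
    rw [← Finset.filter_not]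
    exact Finset.filter_congr (fun x _ => by simp only [not_lt])
  rw [hset, e1, Finset.card_sdiff_of_subset (Finset.filter_subset _ _), card_open P hj]
  have hcard : (Icc 1 j).card = j := by rw [Nat.card_Icc]; omega
  have hsv := sv_le_self P j
  have hfv : fv P j = j - sv P j := rfl
  omega

/-- Fibers of the closing-time map. -/
noncomputable def fiber (P : SPath n) (k : ℕ) : Finset ℕ :=
  (Icc 1 n).filter (fun i => mv P i = k)

lemma mem_fiber {P : SPath n} {i k : ℕ} :
    i ∈ fiber P k ↔ (1 ≤ i ∧ i ≤ n) ∧ mv P i = k := by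
  simp [fiber, mem_filter, mem_Icc]

lemma self_mem_fiber {P : SPath n} {i k : ℕ} (hi : i ∈ fiber P k) : k ∈ fiber P k := by
  rw [mem_fiber] at hi ⊢
  have hm := mv_mem P hi.1.2
  have h1 : mv P k = k := mv_self P hi.1.2 hi.2
  refine ⟨⟨?_, ?_⟩, h1⟩
  · have := hi.1.1; have := hm.1; have := hi.2; omega
  · have := hm.2.2; have := hi.2; omega

lemma le_of_mem_fiber {P : SPath n} {i k : ℕ} (hi : i ∈ fiber P k) : i ≤ k := by
  rw [mem_fiber] at hi
  have := (mv_mem P hi.1.2).1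
  omega

/-- The partition associated to a path. -/
noncomputable def pathPartition (P : SPath n) : Finpartition (Icc 1 n) :=
  Finpartition.ofErase ((Icc 1 n).image (fiber P))
    (by
      rw [Finset.supIndep_iff_pairwiseDisjoint]
      intro A hA B hB hAB
      simp only [coe_image, Set.mem_image] at hA hB
      obtain ⟨k, _, rfl⟩ := hA
      obtain ⟨k', _, rfl⟩ := hB
      simp only [Function.onFun, id_eq]
      rw [Finset.disjoint_left]
      intro a haA haB
      rw [mem_fiber] at haA haB
      exact hAB (by rw [← haA.2, haB.2]))
    (by
      ext a
      rw [Finset.mem_sup]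
      simp only [id_eq]
      constructor
      · rintro ⟨B, hB, haB⟩
        simp only [mem_image] at hB
        obtain ⟨k, _, rfl⟩ := hB
        rw [mem_fiber] at haB
        simp only [mem_Icc]
        exact haB.1
      · intro ha
        simp only [mem_Icc] at ha
        refine ⟨fiber P (mv P a), ?_, ?_⟩
        · simp only [mem_image]
          refine ⟨mv P a, ?_, rfl⟩
          have hm := mv_mem P ha.2
          simp only [mem_Icc]
          constructor
          · have := hm.1; have := ha.1; omega
          · exact hm.2.2
        · rw [mem_fiber]; exact ⟨ha, rfl⟩)

lemma mem_parts_pathPartition {P : SPath n} {A : Finset ℕ} :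
    A ∈ (pathPartition P).parts ↔ A ≠ ∅ ∧ ∃ k ∈ Icc 1 n, fiber P k = A := by
  simp only [pathPartition, Finpartition.ofErase, mem_erase, bot_eq_empty, mem_image]

lemma pathPartition_injective : Function.Injective (pathPartition (n := n)) := by
  intro P Q h
  have hmv : ∀ i, 1 ≤ i → i ≤ n → mv P i = mv Q i := by
    intro i h1 h2
    have hiA : i ∈ fiber P (mv P i) := by rw [mem_fiber]; exact ⟨⟨h1, h2⟩, rfl⟩
    have hA : fiber P (mv P i) ∈ (pathPartition P).parts := by
      rw [mem_parts_pathPartition]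
      refine ⟨Finset.ne_empty_of_mem hiA, mv P i, ?_, rfl⟩
      have hm := mv_mem P h2
      simp only [mem_Icc]
      exact ⟨by omega, hm.2.2⟩
    rw [h, mem_parts_pathPartition] at hA
    obtain ⟨-, k', -, hk'⟩ := hA
    have hiQ : i ∈ fiber Q k' := by rw [hk']; exact hiA
    have hk'max : k' ∈ fiber P (mv P i) := by rw [← hk']; exact self_mem_fiber hiQ
    have hPmax : mv P i ∈ fiber Q k' := by rw [hk']; exact self_mem_fiber hiA
    have h1' : k' ≤ mv P i := le_of_mem_fiber hk'max
    have h2' : mv P i ≤ k' := le_of_mem_fiber hPmax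
    have h3' : mv Q i = k' := (mem_fiber.1 hiQ).2
    omega
  apply sv_inj
  intro j
  by_cases hj : j ≤ n
  · rw [← card_closed P hj, ← card_closed Q hj]
    congr 1
    apply Finset.filter_congr
    intro x hx
    simp only [mem_Icc] at hx
    rw [hmv x hx.1 hx.2]
  · rw [sv_of_gt P hj, sv_of_gt Q hj]

/-- A crossing partition for `n ≥ 4`. -/
noncomputable def crossPartition (n : ℕ) (hn : 4 ≤ n) : Finpartition (Icc 1 n) :=
  Finpartition.ofErase
    (insert {1, 3} (insert {2, 4} ((Icc 5 n).image fun i => ({i} : Finset ℕ))))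
    (by
      rw [Finset.supIndep_iff_pairwiseDisjoint]
      intro A hA B hB hAB
      simp only [coe_insert, Set.mem_insert_iff, coe_image, Set.mem_image, mem_coe,
        mem_Icc] at hA hB
      simp only [Function.onFun, id_eq]
      rw [Finset.disjoint_left]
      intro a haA haB
      apply hAB
      rcases hA with rfl | rfl | ⟨i, hi, rfl⟩ <;>
          rcases hB with rfl | rfl | ⟨i', hi', rfl⟩ <;>
          simp only [mem_insert, mem_singleton] at haA haB <;>
          first
            | rfl
            | omega
            | (exfalso; omega)
            | (subst haA; subst haB; rfl)
            | (congr 1; omega))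
    (by
      ext a
      rw [Finset.mem_sup]
      simp only [id_eq, mem_insert, mem_image, mem_Icc]
      constructor
      · rintro ⟨B, hB, haB⟩
        rcases hB with rfl | rfl | ⟨i, hi, rfl⟩ <;>
          simp only [mem_insert, mem_singleton] at haB <;> omega
      · intro ha
        by_cases h1 : a = 1 ∨ a = 3
        · refine ⟨{1, 3}, Or.inl rfl, ?_⟩
          simp only [mem_insert, mem_singleton]; omega
        by_cases h2 : a = 2 ∨ a = 4
        · refine ⟨{2, 4}, Or.inr (Or.inl rfl), ?_⟩
          simp only [mem_insert, mem_singleton]; omega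
        · refine ⟨{a}, Or.inr (Or.inr ⟨a, ⟨by omega, by omega⟩, rfl⟩), mem_singleton_self a⟩)

lemma crossPartition_not_mem (hn : 4 ≤ n) :
    crossPartition n hn ∉ Set.range (pathPartition (n := n)) := by
  rintro ⟨P, hP⟩
  have h13 : ({1, 3} : Finset ℕ) ∈ (crossPartition n hn).parts := by
    simp only [crossPartition, Finpartition.ofErase]
    exact mem_erase.2 ⟨by decide, mem_insert_self _ _⟩
  have h24 : ({2, 4} : Finset ℕ) ∈ (crossPartition n hn).parts := by
    simp only [crossPartition, Finpartition.ofErase]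
    exact mem_erase.2 ⟨by decide, mem_insert_of_mem (mem_insert_self _ _)⟩
  rw [← hP, mem_parts_pathPartition] at h13 h24
  obtain ⟨-, k, -, hk⟩ := h13
  obtain ⟨-, k', -, hk'⟩ := h24
  have h1f : (1 : ℕ) ∈ fiber P k := by rw [hk]; simp
  have h3f : (3 : ℕ) ∈ fiber P k := by rw [hk]; simp
  have hkf : k ∈ fiber P k := self_mem_fiber h1f
  have hk3 : k = 3 := by
    have := le_of_mem_fiber h3f
    rw [hk, mem_insert, mem_singleton] at hkf
    omega
  have hm1 : mv P 1 = 3 := by rw [← hk3]; exact (mem_fiber.1 h1f).2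
  have h2f : (2 : ℕ) ∈ fiber P k' := by rw [hk']; simp
  have h4f : (4 : ℕ) ∈ fiber P k' := by rw [hk']; simp
  have hkf' : k' ∈ fiber P k' := self_mem_fiber h2f
  have hk4 : k' = 4 := by
    have := le_of_mem_fiber h4f
    rw [hk', mem_insert, mem_singleton] at hkf'
    omega
  have hm2 : mv P 2 = 4 := by rw [← hk4]; exact (mem_fiber.1 h2f).2
  have hA : fv P 0 < fv P 1 := by
    have := mv_min P (i := 1) (j := 1) le_rfl (by omega)
    simpa using this
  have hB : fv P 1 < fv P 3 := by
    have := mv_min P (i := 2) (j := 3) (by omega) (by omega)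
    norm_num at this
    exact this
  have hC : fv P 3 ≤ fv P 0 := by
    have := (mv_mem P (show (1:ℕ) ≤ n by omega)).2.1
    rw [hm1] at this
    norm_num at this
    exact this
  omega

end SPathAux

open SPathAux Finset in
set_option maxRecDepth 20000 in
theorem spath_card_le_bell (n : ℕ) :
    Nat.card (SPath n) ≤ bellNumber n ∧ (Nat.card (SPath n) = bellNumber n ↔ n < 4) := by
  classical
  refine ⟨Nat.card_le_card_of_injective _ pathPartition_injective, ?_, ?_⟩
  · intro heq
    by_contra hlt
    push_neg at hlt
    have hstrict : Fintype.card (SPath n) < Fintype.card (Finpartition (Icc 1 n)) :=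
      Fintype.card_lt_of_injective_of_notMem _ pathPartition_injective
        (crossPartition_not_mem hlt)
    rw [Nat.card_eq_fintype_card, bellNumber, Nat.card_eq_fintype_card] at heq
    omega
  · intro hlt
    rw [Nat.card_eq_fintype_card, bellNumber, Nat.card_eq_fintype_card]
    interval_cases n <;> decide
end

section
/- For every set partition p of {1,...,n}, there is a unique S-path S of n+1 coordinates such that p corresponds to S, i.e., the map sending a partition to its associated S-path is well-defined: set S_0 = 0, and for j = 1,...,n, let S_j - S_{j-1} equal the size of the cell of p whose maximal element is j (or 0 if no cell has maximal element j); then S is an S-path (S_0 = 0, S_n = n, S_j ≤ j, and S is nondecreasing). -/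
/-- Given a set partition `p` of `{1,...,n}`, the associated S-path: `S j` is the total
size of the cells of `p` whose maximal element is at most `j`, so that
`S j - S (j-1)` is the size of the cell with maximal element `j` (or `0` if none). -/
def pathOfPartition (n : ℕ) (p : Finpartition (Finset.Icc 1 n)) (j : ℕ) : ℕ :=
  ∑ C ∈ p.parts.filter (fun C => ∀ x ∈ C, x ≤ j), C.card

open Finset

namespace Finpartition

variable {α : Type*} [DecidableEq α] {s : Finset α}

theorem sum_card_filter_le_card (P : Finpartition s) {q : Finset α → Prop} [DecidablePred q]
    {t : Finset α} (h : ∀ C ∈ P.parts, q C → C ⊆ t) :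
    ∑ C ∈ P.parts.filter q, #C ≤ #t := by
  refine (card_biUnion (t := id) (P.disjoint.subset (filter_subset q P.parts))).symm.trans_le <|
    card_le_card (biUnion_subset.2 fun C hC => ?_)
  rw [mem_filter] at hC
  exact h C hC.1 hC.2

end Finpartition

theorem pathOfPartition_le (n : ℕ) (p : Finpartition (Icc 1 n)) (j : ℕ) :
    pathOfPartition n p j ≤ j := by
  refine (p.sum_card_filter_le_card fun C hC hCj x hx => ?_).trans_eq (Nat.card_Icc 1 j)
  exact mem_Icc.2 ⟨(mem_Icc.1 (p.le hC hx)).1, hCj x hx⟩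

theorem pathOfPartition_self (n : ℕ) (p : Finpartition (Icc 1 n)) :
    pathOfPartition n p n = n := by
  have hall : p.parts.filter (fun C => ∀ x ∈ C, x ≤ n) = p.parts :=
    filter_true_of_mem fun C hC x hx => (mem_Icc.1 (p.le hC hx)).2
  rw [pathOfPartition, hall, p.sum_card_parts, Nat.card_Icc, Nat.add_sub_cancel]

theorem pathOfPartition_mono (n : ℕ) (p : Finpartition (Icc 1 n)) :
    Monotone (pathOfPartition n p) := fun _ _ hjk =>
  sum_le_sum_of_subset (monotone_filter_right _ fun _ _ hC x hx => (hC x hx).trans hjk)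

/-- The map sending a set partition of `{1,...,n}` to its associated S-path is
well-defined: the result is an S-path, i.e. `S 0 = 0`, `S n = n`, `S j ≤ j` for all
`j ≤ n`, and `S` is nondecreasing. -/
theorem pathOfPartition_isSPath (n : ℕ) (p : Finpartition (Finset.Icc 1 n)) :
    pathOfPartition n p 0 = 0 ∧ pathOfPartition n p n = n ∧
      (∀ j ≤ n, pathOfPartition n p j ≤ j) ∧
      (∀ j k, j ≤ k → pathOfPartition n p j ≤ pathOfPartition n p k) :=
  ⟨Nat.le_zero.1 (pathOfPartition_le n p 0), pathOfPartition_self n p,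
    fun j _ => pathOfPartition_le n p j, fun _ _ => (pathOfPartition_mono n p ·)⟩
end

section
/- Fix an S-path S = (S_0,...,S_n). The number of set partitions p of {1,...,n} that correspond to S equals the product over all j in {1,...,n} with S_j > S_{j-1} of the binomial coefficient C(j - 1 - S_{j-1}, j - S_j). -/
/-- A set partition `p` of `{1,...,n}` corresponds to an S-path `S` if (i) the maximal
elements of the cells of `p` are exactly the indices `j` with `S j > S (j-1)`, and
(ii) the cell with maximal element `j` has size `S j - S (j-1)`. -/
def Corresponds (n : ℕ) (S : ℕ → ℕ) (p : Finpartition (Finset.Icc 1 n)) : Prop :=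
  ∀ j ∈ Finset.Icc 1 n,
    ((∃ C ∈ p.parts, j ∈ C ∧ ∀ x ∈ C, x ≤ j) ↔ S (j - 1) < S j) ∧
    (∀ C ∈ p.parts, j ∈ C → (∀ x ∈ C, x ≤ j) → C.card = S j - S (j - 1))

/-!
Record a partition of a finite linearly ordered set `s` by the set `J` of maxima of its parts and
their sizes `c j`. The part of the smallest maximum `m` is `m` together with any `c m - 1` elements
below `m`. Removing it leaves a partition of the rest with data `J \ {m}` and `c`, and does not
change, for a later maximum `j`, the number `#{x ∈ s | x < j} - ∑_{i ∈ J, i < j} c i` of elements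
below `j` not used by earlier parts. Induction gives a product of binomial coefficients; for an
S-path, `J` is the set of ascents and this number telescopes to `j - 1 - S (j - 1)`.
-/

open Finset

lemma Finset.card_filter_sdiff_of_subset {α : Type*} [DecidableEq α] {s B : Finset α} {p : α → Prop}
    [DecidablePred p] (hB : B ⊆ {x ∈ s | p x}) :
    #{x ∈ s \ B | p x} = #{x ∈ s | p x} - #B := by
  rw [← card_sdiff_of_subset hB]
  congr 1
  ext x
  simp only [mem_filter, mem_sdiff]
  tauto

namespace Finpartition

section

variable {α : Type*} [DecidableEq α] {s B : Finset α}

lemma avoid_parts_of_mem (P : Finpartition s) (hB : B ∈ P.parts) :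
    (P.avoid B).parts = P.parts.erase B := by
  ext C
  rw [mem_avoid, mem_erase]
  constructor
  · rintro ⟨D, hD, hDB, rfl⟩
    have hDB' : D ≠ B := by rintro rfl; exact hDB le_rfl
    rw [show D \ B = D from (P.disjoint hD hB hDB').sdiff_eq_left]
    exact ⟨hDB', hD⟩
  · rintro ⟨hCB, hC⟩
    have hCB' := P.disjoint hC hB hCB
    exact ⟨C, hC, fun hle => P.ne_bot hC (hCB'.eq_bot_of_le hle), hCB'.sdiff_eq_left⟩

lemma part_avoid (P : Finpartition s) (hB : B ∈ P.parts) {x : α} (hx : x ∈ s \ B) :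
    (P.avoid B).part x = P.part x := by
  rw [mem_sdiff] at hx
  refine part_eq_of_mem _ ?_ (P.mem_part_self.2 hx.1)
  rw [avoid_parts_of_mem P hB, mem_erase]
  exact ⟨fun h => hx.2 (h ▸ P.mem_part_self.2 hx.1), P.part_mem.2 hx.1⟩

def partEqEquiv {a : α} (haB : a ∈ B) (hBs : B ⊆ s) :
    {P : Finpartition s // P.part a = B} ≃ Finpartition (s \ B) where
  toFun P := P.1.avoid B
  invFun Q := ⟨Q.extend (ne_empty_of_mem haB) sdiff_disjoint (sdiff_union_of_subset hBs),
    part_eq_of_mem _ (mem_insert_self _ _) haB⟩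
  left_inv := by
    rintro ⟨P, rfl⟩
    have hB : P.part a ∈ P.parts := P.part_mem.2 (hBs haB)
    exact Subtype.ext <| Finpartition.ext <| by
      rw [extend_parts, avoid_parts_of_mem _ hB, insert_erase hB]
  right_inv Q := by
    have hBQ : B ∉ Q.parts := fun h => (mem_sdiff.1 (Q.le h haB)).2 haB
    refine Finpartition.ext ?_
    rw [avoid_parts_of_mem _ (mem_insert_self _ _), extend_parts, erase_insert hBQ]

lemma exists_mem_parts_mem_iff (P : Finpartition s) {a : α} (ha : a ∈ s) (q : Finset α → Prop) :
    (∃ C ∈ P.parts, a ∈ C ∧ q C) ↔ q (P.part a) :=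
  ⟨fun ⟨_, hC, haC, hq⟩ => P.part_eq_of_mem hC haC ▸ hq,
    fun hq => ⟨_, P.part_mem.2 ha, P.mem_part_self.2 ha, hq⟩⟩

lemma forall_mem_parts_mem_iff (P : Finpartition s) {a : α} (ha : a ∈ s) (q : Finset α → Prop) :
    (∀ C ∈ P.parts, a ∈ C → q C) ↔ q (P.part a) :=
  ⟨fun h => h _ (P.part_mem.2 ha) (P.mem_part_self.2 ha),
    fun hq _ hC haC => P.part_eq_of_mem hC haC ▸ hq⟩

end

section PartMaxima

variable {α : Type*} [LinearOrder α] {s B J : Finset α} {c : α → ℕ} {m : α}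

def partMaxima (P : Finpartition s) : Finset α := {j ∈ s | ∀ x ∈ P.part j, x ≤ j}

def HasPartMaxima (J : Finset α) (c : α → ℕ) (P : Finpartition s) : Prop :=
  P.partMaxima = J ∧ ∀ j ∈ J, #(P.part j) = c j

lemma mem_partMaxima {P : Finpartition s} {j : α} :
    j ∈ P.partMaxima ↔ j ∈ s ∧ ∀ x ∈ P.part j, x ≤ j :=
  mem_filter

lemma hasPartMaxima_filter_iff (P : Finpartition s) (q : α → Prop) [DecidablePred q] :
    P.HasPartMaxima {j ∈ s | q j} c ↔
      ∀ j ∈ s, ((∀ x ∈ P.part j, x ≤ j) ↔ q j) ∧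
        ((∀ x ∈ P.part j, x ≤ j) → #(P.part j) = c j) := by
  simp only [HasPartMaxima, partMaxima, filter_inj', mem_filter, and_imp]
  constructor
  · rintro ⟨hmax, hcard⟩ j hj
    exact ⟨hmax hj, fun h => hcard j hj ((hmax hj).1 h)⟩
  · intro h
    exact ⟨fun j hj => (h j hj).1, fun j hj hq => (h j hj).2 ((h j hj).1.2 hq)⟩

lemma partMaxima_eq_insert (P : Finpartition s) (hm : P.part m = B) (hmB : m ∈ B)
    (hBm : ∀ x ∈ B, x ≤ m) : P.partMaxima = insert m (P.avoid B).partMaxima := by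
  have hms : m ∈ s := P.mem_part_self.1 (hm ▸ hmB)
  have hB : B ∈ P.parts := hm ▸ P.part_mem.2 hms
  ext j
  rw [mem_insert, mem_partMaxima, mem_partMaxima]
  by_cases hjB : j ∈ B
  · rw [P.part_eq_of_mem hB hjB]
    constructor
    · exact fun h => Or.inl (le_antisymm (hBm j hjB) (h.2 m hmB))
    · rintro (rfl | h)
      · exact ⟨hms, hBm⟩
      · exact absurd hjB (mem_sdiff.1 h.1).2
  · have hjm : j ≠ m := fun h => hjB (h ▸ hmB)
    simp only [hjm, false_or, mem_sdiff, hjB, not_false_eq_true, and_true]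
    refine and_congr_right fun hjs => ?_
    rw [P.part_avoid hB (mem_sdiff.2 ⟨hjs, hjB⟩)]

lemma hasPartMaxima_insert_iff_avoid (P : Finpartition s) (hm : P.part m = B) (hmB : m ∈ B)
    (hBm : ∀ x ∈ B, x ≤ m) (hB : #B = c m) (hmJ : m ∉ J) :
    P.HasPartMaxima (insert m J) c ↔ (P.avoid B).HasPartMaxima J c := by
  have hms : m ∈ s := P.mem_part_self.1 (hm ▸ hmB)
  have hBP : B ∈ P.parts := hm ▸ P.part_mem.2 hms
  have havoid : (P.avoid B).partMaxima ⊆ s \ B := filter_subset _ _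
  have hmavoid : m ∉ (P.avoid B).partMaxima := fun h => (mem_sdiff.1 (havoid h)).2 hmB
  have hinsert : insert m (P.avoid B).partMaxima = insert m J ↔ (P.avoid B).partMaxima = J :=
    ⟨fun h => by rw [← erase_insert hmavoid, h, erase_insert hmJ], congr_arg _⟩
  rw [HasPartMaxima, HasPartMaxima, P.partMaxima_eq_insert hm hmB hBm, hinsert,
    forall_mem_insert, hm, and_iff_right hB]
  refine and_congr_right fun hJ => forall₂_congr fun j hj => ?_
  rw [P.part_avoid hBP (havoid (hJ ▸ hj))]

lemma card_hasPartMaxima_insert_of_part_eq (hmB : m ∈ B) (hBs : B ⊆ s) (hBm : ∀ x ∈ B, x ≤ m)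
    (hB : #B = c m) (hmJ : m ∉ J) :
    Nat.card {P : Finpartition s // P.part m = B ∧ P.HasPartMaxima (insert m J) c} =
      Nat.card {Q : Finpartition (s \ B) // Q.HasPartMaxima J c} :=
  Nat.card_congr <| (Equiv.subtypeSubtypeEquivSubtypeInter _ _).symm.trans <|
    (partEqEquiv hmB hBs).subtypeEquiv fun P =>
      P.1.hasPartMaxima_insert_iff_avoid P.2 hmB hBm hB hmJ

lemma card_hasPartMaxima_insert_eq_sum :
    Nat.card {P : Finpartition s // P.HasPartMaxima (insert m J) c} =
      ∑ A ∈ powersetCard (c m - 1) {x ∈ s | x < m},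
        Nat.card
          {P : Finpartition s // P.part m = insert m A ∧ P.HasPartMaxima (insert m J) c} := by
  classical
  simp only [Nat.card_eq_fintype_card, Fintype.card_subtype]
  rw [card_eq_sum_card_fiberwise (f := fun P => (P.part m).erase m)]
  · refine sum_congr rfl fun A hA => ?_
    have hmA : m ∉ A := fun h => lt_irrefl m (mem_filter.1 ((mem_powersetCard.1 hA).1 h)).2
    rw [filter_filter]
    refine congr_arg card (filter_congr fun P _ => ⟨fun ⟨hP, hPA⟩ => ⟨?_, hP⟩, ?_⟩)
    · have hmP := (mem_partMaxima.1 (hP.1 ▸ mem_insert_self m J)).1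
      exact (erase_eq_iff_eq_insert (P.mem_part_self.2 hmP) hmA).1 hPA
    · rintro ⟨hPA, hP⟩
      exact ⟨hP, by rw [hPA, erase_insert hmA]⟩
  · intro P hP
    obtain ⟨hmax, hcard⟩ := (mem_filter.1 hP).2
    obtain ⟨hms, hle⟩ := mem_partMaxima.1 (hmax ▸ mem_insert_self m J)
    rw [mem_coe, mem_powersetCard, card_erase_of_mem (P.mem_part_self.2 hms),
      hcard m (mem_insert_self m J)]
    refine ⟨fun x hx => ?_, rfl⟩
    obtain ⟨hxm, hx⟩ := mem_erase.1 hx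
    exact mem_filter.2 ⟨P.part_subset m hx, lt_of_le_of_ne (hle x hx) hxm⟩

theorem card_hasPartMaxima (hJs : J ⊆ s) (hc : ∀ j ∈ J, 0 < c j) (hsum : ∑ j ∈ J, c j = #s) :
    Nat.card {P : Finpartition s // P.HasPartMaxima J c} =
      ∏ j ∈ J, (#{x ∈ s | x < j} - ∑ i ∈ J with i < j, c i).choose (c j - 1) := by
  induction J using Finset.induction_on_min generalizing s with
  | empty =>
    obtain rfl : s = ∅ := card_eq_zero.1 hsum.symm
    have hall (P : Finpartition (∅ : Finset α)) : P.HasPartMaxima ∅ c :=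
      ⟨filter_empty _, fun _ h => absurd h (notMem_empty _)⟩
    rw [Nat.card_congr (Equiv.subtypeUnivEquiv hall), prod_empty]
    exact Nat.card_unique (α := Finpartition (⊥ : Finset α))
  | insert m J hmJ ih =>
    have hm : m ∉ J := fun h => lt_irrefl m (hmJ m h)
    have hcm := hc m (mem_insert_self m J)
    have hbelow_m : {i ∈ insert m J | i < m} = ∅ :=
      filter_eq_empty_iff.2 fun i hi =>
        not_lt.2 ((mem_insert.1 hi).elim ge_of_eq fun h => (hmJ i h).le)
    rw [card_hasPartMaxima_insert_eq_sum, prod_insert hm, hbelow_m, sum_empty, Nat.sub_zero,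
      ← card_powersetCard, ← smul_eq_mul, ← sum_const]
    refine sum_congr rfl fun A hA => ?_
    obtain ⟨hAs, hAcard⟩ := mem_powersetCard.1 hA
    have hAm : ∀ x ∈ A, x < m := fun x hx => (mem_filter.1 (hAs hx)).2
    have hmA : m ∉ A := fun h => lt_irrefl m (hAm m h)
    have hBm : ∀ x ∈ insert m A, x ≤ m := by
      simpa only [forall_mem_insert] using ⟨le_rfl, fun x hx => (hAm x hx).le⟩
    have hBs : insert m A ⊆ s :=
      insert_subset (hJs (mem_insert_self m J)) fun x hx => (mem_filter.1 (hAs hx)).1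
    have hBcard : #(insert m A) = c m := by rw [card_insert_of_notMem hmA, hAcard]; omega
    have hBlt (j) (hj : j ∈ J) : insert m A ⊆ {x ∈ s | x < j} := fun x hx =>
      mem_filter.2 ⟨hBs hx, (hBm x hx).trans_lt (hmJ j hj)⟩
    have hsum' : ∑ j ∈ J, c j = #(s \ insert m A) := by
      rw [card_sdiff_of_subset hBs, ← hsum, sum_insert hm, hBcard, Nat.add_sub_cancel_left]
    rw [card_hasPartMaxima_insert_of_part_eq (mem_insert_self m A) hBs hBm hBcard hm,
      ih (fun j hj => mem_sdiff.2 ⟨hJs (mem_insert_of_mem hj),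
        fun h => lt_irrefl m ((hmJ j hj).trans_le (hBm j h))⟩)
        (fun j hj => hc j (mem_insert_of_mem hj)) hsum']
    refine prod_congr rfl fun j hj => ?_
    rw [card_filter_sdiff_of_subset (hBlt j hj), filter_insert, if_pos (hmJ j hj),
      sum_insert (fun h => hm (mem_filter.1 h).1), hBcard, Nat.sub_sub]

end PartMaxima

end Finpartition

lemma sum_increments_filter_lt {S : ℕ → ℕ} (hS : Monotone S) {n j : ℕ} (hj : j ≤ n + 1) :
    ∑ i ∈ {i ∈ Icc 1 n | S (i - 1) < S i} with i < j, (S i - S (i - 1)) = S (j - 1) - S 0 := by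
  rw [filter_comm, sum_filter_of_ne fun i _ h => by omega, ← Ico_add_one_right_eq_Icc,
    Ico_filter_lt_of_le_right hj, sum_Ico_eq_sum_range]
  simpa only [add_comm 1, Nat.add_sub_cancel] using sum_range_tsub hS (j - 1)

lemma corresponds_iff_hasPartMaxima {n : ℕ} {S : ℕ → ℕ} (p : Finpartition (Icc 1 n)) :
    Corresponds n S p ↔
      p.HasPartMaxima {j ∈ Icc 1 n | S (j - 1) < S j} (fun j => S j - S (j - 1)) := by
  rw [Finpartition.hasPartMaxima_filter_iff]
  exact forall₂_congr fun j hj => and_congr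
    (iff_congr (p.exists_mem_parts_mem_iff hj _) Iff.rfl) (p.forall_mem_parts_mem_iff hj _)

/-- The number of set partitions of `{1,...,n}` corresponding to a fixed S-path `S`
equals `∏_{j : S_j > S_{j-1}} C(j - 1 - S_{j-1}, j - S_j)`. -/
theorem card_partitions_corresponding (n : ℕ) (S : ℕ → ℕ)
    (h0 : S 0 = 0) (hn : S n = n) (hle : ∀ j ≤ n, S j ≤ j)
    (hmono : ∀ j, S j ≤ S (j + 1)) :
    Nat.card {p : Finpartition (Finset.Icc 1 n) // Corresponds n S p} =
      ∏ j ∈ (Finset.Icc 1 n).filter (fun j => S (j - 1) < S j),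
        Nat.choose (j - 1 - S (j - 1)) (j - S j) := by
  have hS : Monotone S := monotone_nat_of_le_succ hmono
  have htotal : ∑ j ∈ Icc 1 n with S (j - 1) < S j, (S j - S (j - 1)) = #(Icc 1 n) := by
    have h := sum_increments_filter_lt hS (le_refl (n + 1))
    rw [filter_comm, Icc_filter_lt_of_lt_right n.lt_succ_self] at h
    rw [h, Nat.card_Icc, Nat.add_sub_cancel, hn, h0, Nat.sub_zero]
  rw [Nat.card_congr (Equiv.subtypeEquivRight corresponds_iff_hasPartMaxima),
    Finpartition.card_hasPartMaxima (filter_subset _ _)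
      (fun j hj => by rw [mem_filter] at hj; omega) htotal]
  refine prod_congr rfl fun j hj => ?_
  obtain ⟨⟨hj1, hjn⟩, hjump⟩ := by simpa only [mem_filter, mem_Icc] using hj
  rw [sum_increments_filter_lt hS (by omega), h0, Nat.sub_zero, ← Ico_add_one_right_eq_Icc,
    Ico_filter_lt_of_le_right (by omega), Nat.card_Ico]
  exact Nat.choose_symm_of_eq_add (by have := hle j hjn; omega)
end

section
/- The sum over all S-paths S of n+1 coordinates of the product over j with S_j > S_{j-1} of C(j-1-S_{j-1}, j-S_j) equals the Bell number B_n. -/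
noncomputable instance (n : ℕ) : Fintype (SPath n) := by
  unfold SPath; exact Fintype.ofFinite _

/-- The value `S j` of an S-path, as a natural number. -/
def pathVal {n : ℕ} (S : SPath n) (j : ℕ) : ℕ :=
  if h : j ≤ n then (S.1 ⟨j, Nat.lt_succ_of_le h⟩ : ℕ) else n

/-!
Call `weightedPathCount n m` the weighted number of S-paths of length `n` ending at height
`m`. It equals `C(n, m) * B m`. Indeed, a path to height `m` at time `n + 1` is a path to some
height `k ≤ m` at time `n` followed by a step of weight `1` if `k = m` and `C(n - k, n + 1 - m)`
otherwise; as `C(n, k) * C(n - k, n + 1 - m) = C(n, m - 1) * C(m - 1, k)`, the recurrence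
`B m = ∑ k, C(m - 1, k) * B k` and Pascal's rule close the induction. On the other side, the
finpartitions of a finset are counted by `Nat.bell`: removing the block of a fixed element `a`
leaves a finpartition of the complement of that block.
-/

namespace Finpartition

variable {α : Type*} [DecidableEq α]

theorem parts_avoid_of_mem [GeneralizedBooleanAlgebra α] {a b : α}
    (P : Finpartition a) (hb : b ∈ P.parts) : (P.avoid b).parts = P.parts.erase b := by
  ext c
  simp only [mem_avoid, Finset.mem_erase]
  constructor
  · rintro ⟨d, hd, hdb, rfl⟩
    have hne : d ≠ b := by rintro rfl; exact hdb le_rfl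
    have hdisj : Disjoint d b := P.disjoint hd hb hne
    rw [hdisj.sdiff_eq_left]
    exact ⟨hne, hd⟩
  · rintro ⟨hne, hc⟩
    have hdisj : Disjoint c b := P.disjoint hc hb hne
    exact ⟨c, hc, fun hle => P.ne_bot hc (hdisj.eq_bot_of_le hle), hdisj.sdiff_eq_left⟩

def subtypeMemPartsEquiv [GeneralizedBooleanAlgebra α] {a b : α}
    (hb : b ≠ ⊥) (hba : b ≤ a) :
    {P : Finpartition a // b ∈ P.parts} ≃ Finpartition (a \ b) where
  toFun P := P.1.avoid b
  invFun Q := ⟨Q.extend hb disjoint_sdiff_self_left (sdiff_sup_cancel hba), by simp⟩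
  left_inv P := by
    ext1; ext1
    simp [parts_avoid_of_mem _ P.2, Finset.insert_erase P.2]
  right_inv Q := by
    ext1
    have hbQ : b ∉ Q.parts := fun h =>
      hb (disjoint_self.1 (disjoint_sdiff_self_left.mono_left (Q.le h)))
    rw [parts_avoid_of_mem _ (by simp), extend_parts, Finset.erase_insert hbQ]


theorem natCard_insert_eq_sum_powerset {s : Finset α} {a : α} (ha : a ∉ s) :
    Nat.card (Finpartition (insert a s)) =
      ∑ u ∈ s.powerset, Nat.card (Finpartition (s \ u)) := by
  have hmaps : ∀ P ∈ (Finset.univ : Finset (Finpartition (insert a s))),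
      P.part a ∈ s.powerset.image (insert a) := by
    intro P _
    refine Finset.mem_image.2 ⟨(P.part a).erase a, ?_, Finset.insert_erase (by simp)⟩
    exact Finset.mem_powerset.2
      ((Finset.erase_subset_erase a (P.part_subset a)).trans (Finset.erase_insert ha).le)
  have hinj : Set.InjOn (insert a) (s.powerset : Set (Finset α)) := fun u hu v hv h => by
    have hau : a ∉ u := fun h => ha (Finset.mem_powerset.1 hu h)
    have hav : a ∉ v := fun h => ha (Finset.mem_powerset.1 hv h)
    rw [← Finset.erase_insert hau, h, Finset.erase_insert hav]
  rw [Nat.card_eq_fintype_card, ← Finset.card_univ, Finset.card_eq_sum_card_fiberwise hmaps,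
    Finset.sum_image hinj]
  refine Finset.sum_congr rfl fun u hu => ?_
  have hne : insert a u ≠ ⊥ := Finset.insert_ne_empty a u
  have hle : insert a u ≤ insert a s := Finset.insert_subset_insert a (Finset.mem_powerset.1 hu)
  have hfiber : ∀ P : Finpartition (insert a s),
      P.part a = insert a u ↔ insert a u ∈ P.parts :=
    fun P => ⟨fun h => h ▸ P.part_mem.2 (Finset.mem_insert_self a s),
      fun h => P.part_eq_of_mem h (Finset.mem_insert_self a u)⟩
  simp_rw [Finset.filter_congr fun P _ => hfiber P]
  rw [← Fintype.card_subtype, ← Nat.card_eq_fintype_card,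
    Nat.card_congr (subtypeMemPartsEquiv hne hle), Finset.insert_sdiff_insert,
    Finset.sdiff_insert_of_notMem ha]

theorem natCard_eq_bell (s : Finset α) : Nat.card (Finpartition s) = Nat.bell s.card := by
  induction s using Finset.strongInduction with
  | H s ih =>
    obtain rfl | ⟨a, ha⟩ := s.eq_empty_or_nonempty
    · exact (Nat.card_unique (α := Finpartition (⊥ : Finset α))).trans Nat.bell_zero.symm
    have hsub : ∀ u ∈ (s.erase a).powerset,
        Nat.card (Finpartition (s.erase a \ u)) = Nat.bell ((s.erase a).card - u.card) := by
      intro u hu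
      rw [ih _ (Finset.sdiff_subset.trans_ssubset (Finset.erase_ssubset ha)),
        Finset.card_sdiff_of_subset (Finset.mem_powerset.1 hu)]
    rw [← Finset.insert_erase ha, natCard_insert_eq_sum_powerset (Finset.notMem_erase a s),
      Finset.card_insert_of_notMem (Finset.notMem_erase a s), Finset.sum_congr rfl hsub,
      Finset.sum_powerset_apply_card (fun k => Nat.bell ((s.erase a).card - k)), Nat.bell_succ,
      Nat.range_succ_eq_Iic]
    rfl

end Finpartition

theorem bellNumber_eq_bell (n : ℕ) : bellNumber n = Nat.bell n := by
  rw [bellNumber, Finpartition.natCard_eq_bell, Nat.card_Icc, Nat.add_sub_cancel]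

theorem Fin.monotone_snoc_iff {α : Type*} [Preorder α] {n : ℕ} {f : Fin (n + 1) → α}
    {x : α} :
    Monotone (Fin.snoc f x : Fin (n + 2) → α) ↔ Monotone f ∧ f (Fin.last n) ≤ x := by
  simp only [Fin.monotone_iff_le_succ, Fin.forall_fin_succ', Fin.snoc_castSucc, Fin.succ_castSucc,
    Fin.succ_last, Fin.snoc_last]

-- The weight of the step from `S j = a` to `S (j + 1) = b`: the paper's factor at index `j + 1`.
def stepWeight (j a b : ℕ) : ℕ := if a < b then (j - a).choose (j + 1 - b) else 1

def pathWeight {n : ℕ} (s : Fin (n + 1) → ℕ) : ℕ :=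
  ∏ j : Fin n, stepWeight j (s j.castSucc) (s j.succ)

def subdiagonalPaths (n : ℕ) : Finset (Fin (n + 1) → ℕ) :=
  {s ∈ Fintype.piFinset fun j => Finset.Iic (j : ℕ) | Monotone s}

def weightedPathCount (n m : ℕ) : ℕ :=
  ∑ s ∈ subdiagonalPaths n with s (Fin.last n) = m, pathWeight s

theorem mem_subdiagonalPaths {n : ℕ} {s : Fin (n + 1) → ℕ} :
    s ∈ subdiagonalPaths n ↔ (∀ j, s j ≤ j) ∧ Monotone s := by
  simp [subdiagonalPaths]

theorem snoc_mem_subdiagonalPaths {n : ℕ} {s : Fin (n + 1) → ℕ} {x : ℕ} :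
    (Fin.snoc s x : Fin (n + 2) → ℕ) ∈ subdiagonalPaths (n + 1) ↔
      s ∈ subdiagonalPaths n ∧ s (Fin.last n) ≤ x ∧ x ≤ n + 1 := by
  simp only [mem_subdiagonalPaths, Fin.monotone_snoc_iff, Fin.forall_fin_succ', Fin.snoc_castSucc,
    Fin.val_castSucc, Fin.snoc_last, Fin.val_last]
  tauto

theorem pathWeight_snoc {n : ℕ} (s : Fin (n + 1) → ℕ) (x : ℕ) :
    pathWeight (Fin.snoc s x : Fin (n + 2) → ℕ) =
      pathWeight s * stepWeight n (s (Fin.last n)) x := by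
  simp only [pathWeight, Fin.prod_univ_castSucc, Fin.succ_castSucc, Fin.snoc_castSucc,
    Fin.succ_last, Fin.snoc_last, Fin.val_castSucc, Fin.val_last]

theorem subdiagonalPaths_zero : subdiagonalPaths 0 = {0} := by
  ext s
  simp [mem_subdiagonalPaths, Fin.forall_fin_one, funext_iff, Subsingleton.monotone]

theorem weightedPathCount_zero (m : ℕ) : weightedPathCount 0 m = if m = 0 then 1 else 0 := by
  simp only [weightedPathCount, subdiagonalPaths_zero, Finset.filter_singleton]
  split_ifs <;> simp_all [pathWeight, eq_comm]

theorem weightedPathCount_succ {n m : ℕ} (hm : m ≤ n + 1) :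
    weightedPathCount (n + 1) m =
      ∑ k ∈ Finset.range (m + 1), weightedPathCount n k * stepWeight n k m := by
  have hsnoc : weightedPathCount (n + 1) m = ∑ s ∈ subdiagonalPaths n with s (Fin.last n) ≤ m,
      pathWeight s * stepWeight n (s (Fin.last n)) m := by
    have hinit : ∀ t : Fin (n + 2) → ℕ, t (Fin.last (n + 1)) = m →
        Fin.snoc (Fin.init t) m = t := fun t ht => ht ▸ Fin.snoc_init_self t
    refine (Finset.sum_nbij' (fun s => Fin.snoc s m) Fin.init ?_ ?_ ?_ ?_ ?_).symm
    · intro s hs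
      simp only [Finset.mem_filter] at hs ⊢
      exact ⟨snoc_mem_subdiagonalPaths.2 ⟨hs.1, hs.2, hm⟩, Fin.snoc_last _ _⟩
    · intro t ht
      simp only [Finset.mem_filter] at ht ⊢
      rw [← hinit t ht.2] at ht
      exact (snoc_mem_subdiagonalPaths.1 ht.1).imp_right And.left
    · intro s _
      exact Fin.init_snoc (α := fun _ => ℕ) m s
    · intro t ht
      exact hinit t (Finset.mem_filter.1 ht).2
    · intro s _
      exact (pathWeight_snoc s m).symm
  rw [hsnoc, ← Finset.sum_fiberwise_of_maps_to
    (s := {s ∈ subdiagonalPaths n | s (Fin.last n) ≤ m})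
    (g := fun s => s (Fin.last n)) (t := Finset.range (m + 1))
    fun s hs => Finset.mem_range_succ_iff.2 (Finset.mem_filter.1 hs).2]
  refine Finset.sum_congr rfl fun k hk => ?_
  rw [weightedPathCount, Finset.sum_mul, Finset.filter_filter]
  refine Finset.sum_congr (Finset.filter_congr fun s _ => ?_) fun s hs => ?_
  · exact ⟨And.right, fun h => ⟨h ▸ Finset.mem_range_succ_iff.1 hk, h⟩⟩
  · rw [(Finset.mem_filter.1 hs).2]

theorem weightedPathCount_eq_zero_of_lt {n m : ℕ} (h : n < m) : weightedPathCount n m = 0 := by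
  refine Finset.sum_eq_zero fun s hs => absurd h ?_
  obtain ⟨hpath, rfl⟩ := Finset.mem_filter.1 hs
  simpa using (mem_subdiagonalPaths.1 hpath).1 (Fin.last n)

theorem Nat.bell_succ_eq_sum_choose_mul_bell (n : ℕ) :
    Nat.bell (n + 1) = ∑ k ∈ Finset.range (n + 1), n.choose k * Nat.bell k := by
  rw [Nat.bell_succ, ← Nat.range_succ_eq_Iic, ← Finset.sum_range_reflect]
  refine Finset.sum_congr rfl fun k hk => ?_
  have hk : k ≤ n := Finset.mem_range_succ_iff.1 hk
  rw [Nat.add_sub_cancel, Nat.choose_symm hk, Nat.sub_sub_self hk]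

theorem sum_choose_mul_bell_mul_stepWeight {n m : ℕ} (hm : m ≤ n + 1) :
    ∑ k ∈ Finset.range (m + 1), n.choose k * Nat.bell k * stepWeight n k m =
      (n + 1).choose m * Nat.bell m := by
  rw [Finset.sum_range_succ, stepWeight, if_neg (lt_irrefl m), mul_one]
  obtain _ | j := m
  · simp
  have hj : j ≤ n := Nat.le_of_succ_le_succ hm
  have hterm : ∀ i ∈ Finset.range (j + 1),
      n.choose i * Nat.bell i * stepWeight n i (j + 1) =
        n.choose j * (j.choose i * Nat.bell i) := by
    intro i hi
    have hi : i ≤ j := Finset.mem_range_succ_iff.1 hi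
    rw [stepWeight, if_pos (Nat.lt_succ_of_le hi), Nat.add_sub_add_right,
      ← Nat.choose_symm_of_eq_add (by omega : n - i = (j - i) + (n - j)), ← mul_assoc,
      Nat.choose_mul (n := n) hi]
    ring
  rw [Finset.sum_congr rfl hterm, ← Finset.mul_sum, ← Nat.bell_succ_eq_sum_choose_mul_bell,
    Nat.choose_succ_succ' n j]
  ring

theorem weightedPathCount_eq (n m : ℕ) : weightedPathCount n m = n.choose m * Nat.bell m := by
  induction n generalizing m with
  | zero => cases m <;> simp [weightedPathCount_zero]
  | succ n ih =>
    by_cases hm : m ≤ n + 1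
    · rw [weightedPathCount_succ hm, Finset.sum_congr rfl fun k _ => by rw [ih k]]
      exact sum_choose_mul_bell_mul_stepWeight hm
    · rw [weightedPathCount_eq_zero_of_lt (by omega), Nat.choose_eq_zero_of_lt (by omega),
        zero_mul]

theorem prod_filter_choose_eq_prod_stepWeight (p : ℕ → ℕ) (n : ℕ) :
    ∏ j ∈ (Finset.Icc 1 n).filter (fun j => p (j - 1) < p j),
      (j - 1 - p (j - 1)).choose (j - p j) =
      ∏ j ∈ Finset.range n, stepWeight j (p j) (p (j + 1)) := by
  rw [Finset.prod_filter]
  induction n with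
  | zero => rfl
  | succ n ih =>
    rw [Finset.prod_Icc_succ_top (Nat.le_add_left 1 n), Finset.prod_range_succ, ih]
    simp only [stepWeight, Nat.add_sub_cancel]

theorem pathVal_coe {n : ℕ} (S : SPath n) (j : Fin (n + 1)) : pathVal S j = S.1 j := by
  simp [pathVal, j.is_le]

theorem prod_choose_pathVal_eq_pathWeight {n : ℕ} (S : SPath n) :
    ∏ j ∈ (Finset.Icc 1 n).filter (fun j => pathVal S (j - 1) < pathVal S j),
      (j - 1 - pathVal S (j - 1)).choose (j - pathVal S j) = pathWeight fun j => (S.1 j : ℕ) := by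
  rw [prod_filter_choose_eq_prod_stepWeight, pathWeight, ← Fin.prod_univ_eq_prod_range]
  simp only [← pathVal_coe, Fin.val_castSucc, Fin.val_succ]

theorem sum_spath_pathWeight_eq_weightedPathCount (n : ℕ) :
    ∑ S : SPath n, pathWeight (fun j => (S.1 j : ℕ)) = weightedPathCount n n := by
  refine Finset.sum_bij (fun S _ => fun j => (S.1 j : ℕ)) ?_ ?_ ?_ fun _ _ => rfl
  · intro S _
    obtain ⟨S, -, hlast, hle, hmono⟩ := S
    exact Finset.mem_filter.2
      ⟨mem_subdiagonalPaths.2 ⟨hle, fun j k hjk => hmono j k hjk⟩, hlast⟩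
  · intro S _ T _ h
    exact Subtype.ext (funext fun j => Fin.ext (congrFun h j))
  · intro s hs
    obtain ⟨hpath, hlast⟩ := Finset.mem_filter.1 hs
    obtain ⟨hle, hmono⟩ := mem_subdiagonalPaths.1 hpath
    refine ⟨⟨fun j => ⟨s j, Nat.lt_succ_of_le ((hle j).trans j.is_le)⟩,
      Nat.le_zero.1 (hle 0), hlast, hle, fun j k hjk => hmono hjk⟩, Finset.mem_univ _, rfl⟩

/-- Summing over all S-paths of `n+1` coordinates the product
`∏_{j : S_j > S_{j-1}} C(j-1-S_{j-1}, j-S_j)` gives the Bell number `B n`. -/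
theorem sum_spath_prod_choose_eq_bell (n : ℕ) :
    (∑ S : SPath n, ∏ j ∈ (Finset.Icc 1 n).filter
      (fun j => pathVal S (j - 1) < pathVal S j),
      Nat.choose (j - 1 - pathVal S (j - 1)) (j - pathVal S j)) = bellNumber n := by
  simp only [prod_choose_pathVal_eq_pathWeight]
  rw [sum_spath_pathWeight_eq_weightedPathCount, weightedPathCount_eq, Nat.choose_self, one_mul,
    bellNumber_eq_bell]
end

section
/- For the Dirichlet-process EPPF (a = 0, b = θ > 0), χ(e_1,...,e_m) = θ^m ∏_{k=1}^m (e_k − 1)! / ∏_{k=1}^{n}(θ + k − 1) with n = ∑ e_k, the sum of χ over all partitions of {1,...,n} equals 1, i.e., ∑_{p partition of {1,...,n}} θ^{|p|} ∏_{C ∈ p} (|C| − 1)! = ∏_{k=1}^{n}(θ + k − 1). -/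
noncomputable instance (n : ℕ) : Fintype (Finpartition (Finset.Icc 1 n)) :=
  Fintype.ofFinite _

/-!
Removing a fresh element `a` maps the partitions of `insert a s` onto those of `s`. The fibre
over `p` consists of `p` with the new cell `{a}`, whose weight `θ ^ #parts * ∏ (#C - 1)!` is `θ`
times that of `p`, and of `p` with `a` added to one of its cells `C`, whose weight is `#C` times
that of `p`. The cells of `p` have total size `#s`, so the fibre weighs `θ + #s` times as much as
`p`, and induction on `s` gives the rising factorial.
-/

open Finset Nat

namespace Finpartition

variable {α : Type*} [DecidableEq α] {a : α} {s : Finset α}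

lemma notMem_parts_of_ssubset {t : Finset α} (P : Finpartition t) {C D : Finset α}
    (hD : D ∈ P.parts) (hCD : C ⊂ D) : C ∉ P.parts := fun hC => by
  obtain ⟨b, hb⟩ := P.nonempty_of_mem_parts hC
  exact hCD.ne (P.eq_of_mem_parts hC hD hb (hCD.subset hb))

lemma notMem_of_mem_parts (ha : a ∉ s) (p : Finpartition s) {C : Finset α} (hC : C ∈ p.parts) :
    a ∉ C :=
  fun h => ha (p.le hC h)

lemma singleton_notMem_parts (ha : a ∉ s) (p : Finpartition s) : {a} ∉ p.parts :=
  fun h => notMem_of_mem_parts ha p h (mem_singleton_self a)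

lemma insert_notMem_parts (ha : a ∉ s) (p : Finpartition s) (C : Finset α) :
    insert a C ∉ p.parts :=
  fun h => notMem_of_mem_parts ha p h (mem_insert_self a C)

section Insert

variable (ha : a ∉ s) (p : Finpartition s)

def extendSingleton : Finpartition (insert a s) :=
  p.extend (b := {a}) (singleton_ne_empty a) (disjoint_singleton_right.2 ha)
    (by rw [sup_comm]; rfl)

lemma parts_extendSingleton : (extendSingleton ha p).parts = insert {a} p.parts := rfl

def insertIntoPart (C : p.parts) : Finpartition (insert a s) where
  parts := insert (insert a (C : Finset α)) (p.parts.erase C)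
  supIndep := by
    rw [supIndep_iff_pairwiseDisjoint, coe_insert]
    refine (p.disjoint.subset fun D hD => mem_of_mem_erase hD).insert fun D hD _ => ?_
    have hCD : Disjoint (C : Finset α) D :=
      p.disjoint C.2 (mem_of_mem_erase hD) (ne_of_mem_erase hD).symm
    exact disjoint_insert_left.2 ⟨notMem_of_mem_parts ha p (mem_of_mem_erase hD), hCD⟩
  sup_parts := by
    have h := p.sup_parts
    rw [← insert_erase C.2, sup_insert] at h
    rw [sup_insert, id, sup_eq_union, insert_union, ← sup_eq_union]
    exact congrArg (insert a) h
  bot_notMem := by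
    rw [mem_insert, not_or]
    exact ⟨(insert_ne_empty a C).symm, fun h => p.bot_notMem (mem_of_mem_erase h)⟩

lemma parts_insertIntoPart (C : p.parts) :
    (insertIntoPart ha p C).parts = insert (insert a (C : Finset α)) (p.parts.erase C) := rfl

end Insert

def eraseElem (ha : a ∉ s) (q : Finpartition (insert a s)) : Finpartition s :=
  (q.avoid {a}).copy (by
    rw [insert_sdiff_of_mem _ (mem_singleton_self a), sdiff_singleton_eq_erase,
      erase_eq_of_notMem ha])

section EraseElem

variable {q : Finpartition (insert a s)}

lemma mem_parts_eraseElem (ha : a ∉ s) {C : Finset α} :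
    C ∈ (eraseElem ha q).parts ↔ ∃ D ∈ q.parts, D ≠ {a} ∧ D.erase a = C := by
  simp only [eraseElem, copy_parts, mem_avoid, sdiff_singleton_eq_erase]
  exact exists_congr fun D => and_congr_right fun hD =>
    and_congr_left' (not_congr (q.nonempty_of_mem_parts hD).subset_singleton_iff)

lemma part_mem_parts_insert : q.part a ∈ q.parts := q.part_mem.2 (mem_insert_self a s)

lemma mem_part_insert : a ∈ q.part a := q.mem_part_self.2 (mem_insert_self a s)

lemma parts_eraseElem_of_singleton_mem (ha : a ∉ s) (hsing : {a} ∈ q.parts) :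
    (eraseElem ha q).parts = q.parts.erase {a} := by
  have erase_eq {D : Finset α} (hD : D ∈ q.parts) (hne : D ≠ {a}) : D.erase a = D :=
    erase_eq_of_notMem fun had => hne (q.eq_of_mem_parts hD hsing had (mem_singleton_self a))
  ext C
  rw [mem_parts_eraseElem, mem_erase]
  constructor
  · rintro ⟨D, hD, hne, rfl⟩
    rw [erase_eq hD hne]
    exact ⟨hne, hD⟩
  · rintro ⟨hne, hC⟩
    exact ⟨C, hC, hne, erase_eq hC hne⟩

lemma parts_eraseElem_of_singleton_notMem (ha : a ∉ s) (hsing : {a} ∉ q.parts) :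
    (eraseElem ha q).parts = insert ((q.part a).erase a) (q.parts.erase (q.part a)) := by
  have ne_singleton {D : Finset α} (hD : D ∈ q.parts) : D ≠ {a} := by
    rintro rfl
    exact hsing hD
  have erase_eq {D : Finset α} (hD : D ∈ q.parts) (hne : D ≠ q.part a) : D.erase a = D :=
    erase_eq_of_notMem fun had => hne (q.part_eq_of_mem hD had).symm
  ext C
  rw [mem_parts_eraseElem, mem_insert, mem_erase]
  constructor
  · rintro ⟨D, hD, -, rfl⟩
    by_cases hDa : D = q.part a
    · exact .inl (hDa ▸ rfl)
    · rw [erase_eq hD hDa]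
      exact .inr ⟨hDa, hD⟩
  · rintro (rfl | ⟨hne, hC⟩)
    · exact ⟨q.part a, part_mem_parts_insert, ne_singleton part_mem_parts_insert, rfl⟩
    · exact ⟨C, hC, ne_singleton hC, erase_eq hC hne⟩

end EraseElem

section Fibre

variable (ha : a ∉ s) (p : Finpartition s)

lemma eraseElem_extendSingleton : eraseElem ha (extendSingleton ha p) = p := by
  ext1
  rw [parts_eraseElem_of_singleton_mem ha (by simp [parts_extendSingleton]),
    parts_extendSingleton, erase_insert (singleton_notMem_parts ha p)]

lemma part_insertIntoPart (C : p.parts) :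
    (insertIntoPart ha p C).part a = insert a (C : Finset α) :=
  part_eq_of_mem _ (mem_insert_self _ _) (mem_insert_self a C)

lemma singleton_notMem_parts_insertIntoPart (C : p.parts) :
    {a} ∉ (insertIntoPart ha p C).parts := by
  rw [parts_insertIntoPart, mem_insert, not_or]
  refine ⟨fun h => ?_, fun h => singleton_notMem_parts ha p (mem_of_mem_erase h)⟩
  obtain ⟨b, hb⟩ := p.nonempty_of_mem_parts C.2
  have hba : b = a := mem_singleton.1 (h ▸ mem_insert_of_mem hb)
  exact notMem_of_mem_parts ha p C.2 (hba ▸ hb)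

lemma eraseElem_insertIntoPart (C : p.parts) : eraseElem ha (insertIntoPart ha p C) = p := by
  ext1
  rw [parts_eraseElem_of_singleton_notMem ha (singleton_notMem_parts_insertIntoPart ha p C),
    part_insertIntoPart, parts_insertIntoPart,
    erase_insert fun h => insert_notMem_parts ha p C (mem_of_mem_erase h),
    erase_insert (notMem_of_mem_parts ha p C.2), insert_erase C.2]

lemma insertIntoPart_injective : Function.Injective (insertIntoPart ha p) := by
  intro C C' h
  have h_part := congrArg (fun q => (q.part a).erase a) h
  simp only [part_insertIntoPart] at h_part
  rw [erase_insert (notMem_of_mem_parts ha p C.2),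
    erase_insert (notMem_of_mem_parts ha p C'.2)] at h_part
  exact Subtype.ext h_part

lemma insertIntoPart_ne_extendSingleton (C : p.parts) :
    insertIntoPart ha p C ≠ extendSingleton ha p := fun h =>
  singleton_notMem_parts_insertIntoPart ha p C (h ▸ by simp [parts_extendSingleton])

lemma eraseElem_eq_iff {q : Finpartition (insert a s)} :
    eraseElem ha q = p ↔ q = extendSingleton ha p ∨ ∃ C, q = insertIntoPart ha p C := by
  constructor
  · rintro rfl
    by_cases hsing : {a} ∈ q.parts
    · left
      ext1
      rw [parts_extendSingleton, parts_eraseElem_of_singleton_mem ha hsing, insert_erase hsing]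
    · right
      have hC : (q.part a).erase a ∈ (eraseElem ha q).parts := by
        rw [parts_eraseElem_of_singleton_notMem ha hsing]
        exact mem_insert_self _ _
      refine ⟨⟨_, hC⟩, ?_⟩
      have hC_notMem : (q.part a).erase a ∉ q.parts.erase (q.part a) :=
        notMem_mono (erase_subset _ _)
          (q.notMem_parts_of_ssubset part_mem_parts_insert (erase_ssubset mem_part_insert))
      ext1
      rw [parts_insertIntoPart]
      dsimp only
      rw [parts_eraseElem_of_singleton_notMem ha hsing, erase_insert hC_notMem,
        insert_erase mem_part_insert, insert_erase part_mem_parts_insert]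
  · rintro (rfl | ⟨C, rfl⟩)
    · exact eraseElem_extendSingleton ha p
    · exact eraseElem_insertIntoPart ha p C

lemma filter_eraseElem_eq :
    univ.filter (eraseElem ha · = p) =
      insert (extendSingleton ha p) (univ.image (insertIntoPart ha p)) := by
  ext q
  simp [eraseElem_eq_iff, @eq_comm _ q]

end Fibre

section EwensWeight

variable {R : Type*} [CommSemiring R]

noncomputable def ewensWeight (θ : R) {t : Finset α} (p : Finpartition t) : R :=
  θ ^ #p.parts * ∏ C ∈ p.parts, ((#C - 1)! : R)

lemma ewensWeight_extendSingleton (θ : R) (ha : a ∉ s) (p : Finpartition s) :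
    ewensWeight θ (extendSingleton ha p) = θ * ewensWeight θ p := by
  rw [ewensWeight, ewensWeight, parts_extendSingleton,
    card_insert_of_notMem (singleton_notMem_parts ha p),
    prod_insert (singleton_notMem_parts ha p), card_singleton, Nat.sub_self, factorial_zero,
    cast_one, one_mul, pow_succ]
  ring

lemma ewensWeight_insertIntoPart (θ : R) (ha : a ∉ s) (p : Finpartition s) (C : p.parts) :
    ewensWeight θ (insertIntoPart ha p C) = #(C : Finset α) * ewensWeight θ p := by
  have h_notMem : insert a (C : Finset α) ∉ p.parts.erase C :=
    fun h => insert_notMem_parts ha p C (mem_of_mem_erase h)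
  have h_factorial : ((#(insert a (C : Finset α)) - 1)! : R) = #(C : Finset α) * (#C.1 - 1)! := by
    rw [card_insert_of_notMem (notMem_of_mem_parts ha p C.2), Nat.add_sub_cancel,
      ← mul_factorial_pred (p.nonempty_of_mem_parts C.2).card_pos.ne', cast_mul]
  rw [ewensWeight, ewensWeight, parts_insertIntoPart, card_insert_of_notMem h_notMem,
    card_erase_add_one C.2, prod_insert h_notMem, h_factorial, ← mul_prod_erase _ _ C.2]
  ring

lemma sum_ewensWeight_insert (θ : R) (ha : a ∉ s) :
    ∑ q : Finpartition (insert a s), ewensWeight θ q =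
      (θ + #s) * ∑ p : Finpartition s, ewensWeight θ p := by
  rw [← sum_fiberwise univ (eraseElem ha) (ewensWeight θ), mul_sum]
  refine sum_congr rfl fun p _ => ?_
  have h_card : ∑ C : p.parts, (#(C : Finset α) : R) = #s := by
    rw [sum_coe_sort p.parts (fun C => (#C : R)), ← cast_sum, p.sum_card_parts]
  rw [filter_eraseElem_eq, sum_insert (by simpa using insertIntoPart_ne_extendSingleton ha p),
    sum_image (insertIntoPart_injective ha p).injOn, ewensWeight_extendSingleton]
  simp only [ewensWeight_insertIntoPart, ← sum_mul, h_card]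
  ring

theorem sum_ewensWeight (θ : R) (s : Finset α) :
    ∑ p : Finpartition s, ewensWeight θ p = ∏ k ∈ range #s, (θ + k) := by
  induction s using Finset.induction_on with
  | empty =>
    have h_card : Fintype.card (Finpartition (∅ : Finset α)) = 1 :=
      Fintype.card_unique (α := Finpartition (⊥ : Finset α))
    simp [ewensWeight, parts_eq_empty_iff.2 rfl, h_card]
  | insert a s ha ih =>
    rw [sum_ewensWeight_insert θ ha, ih, card_insert_of_notMem ha, prod_range_succ, mul_comm]

end EwensWeight

end Finpartition

theorem ewens_eppf_sums_to_one_general (θ : ℝ) (n : ℕ) :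
    (∑ p : Finpartition (Finset.Icc 1 n),
        θ ^ p.parts.card * ∏ C ∈ p.parts, ((C.card - 1).factorial : ℝ)) =
      ∏ k ∈ Finset.range n, (θ + k) := by
  convert Finpartition.sum_ewensWeight θ (Finset.Icc 1 n) using 3
  · rfl
  · rw [Nat.card_Icc, Nat.add_sub_cancel]

/-- The Ewens sampling formula EPPF (Dirichlet process, `a = 0`, `b = θ > 0`) sums to
one over all set partitions of `{1,...,n}`:
`∑_p θ^{|p|} ∏_{C ∈ p} (|C| − 1)! = θ(θ+1)⋯(θ+n−1)`. -/
theorem ewens_eppf_sums_to_one (θ : ℝ) (hθ : 0 < θ) (n : ℕ) :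
    (∑ p : Finpartition (Finset.Icc 1 n),
        θ ^ p.parts.card * ∏ C ∈ p.parts, ((C.card - 1).factorial : ℝ)) =
      ∏ k ∈ Finset.range n, (θ + k) :=
  ewens_eppf_sums_to_one_general θ n
end
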